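/- arXiv:2502.12281 — 5 statements merged into one kernel-verified Lean document; each statement's English description precedes it below -/
import Mathlib

section
/- Let a = (a_1,…,a_n) ∈ ℤ^n with Σ_{i=1}^n a_i = 0, and fix m with 1 ≤ m ≤ n-1. Then the sum over all m-element subsets I ⊆ [n] of (Σ_{i∈I} a_i)^2 equals C(n-2, m-1) · Σ_{i=1}^n a_i^2. -/
/-!
Expanding the squares, the coefficient of `a i * a j` is the number of `m`-sets containing both
`i` and `j`: `C(n-1, m-1)` on the diagonal and `C(n-1, m-1) - C(n-2, m-1)` off it, because the
`m`-sets containing `i` but not `j` are counted by `C(n-2, m-1)`. So the sum is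
`C(n-2, m-1) * ∑ aᵢ² + (C(n-1, m-1) - C(n-2, m-1)) * (∑ aᵢ)²`, and the second term vanishes.
-/

open Finset

section
variable {α : Type*} [Fintype α] [DecidableEq α]

theorem sum_sq_sum_eq_sum_sum_card_smul {R : Type*} [CommSemiring R] (𝒜 : Finset (Finset α))
    (a : α → R) :
    ∑ I ∈ 𝒜, (∑ i ∈ I, a i) ^ 2 = ∑ i, ∑ j, #{I ∈ 𝒜 | i ∈ I ∧ j ∈ I} • (a i * a j) := by
  calc ∑ I ∈ 𝒜, (∑ i ∈ I, a i) ^ 2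
      = ∑ I ∈ 𝒜, ∑ i, ∑ j, if i ∈ I ∧ j ∈ I then a i * a j else 0 := by
        simp only [sq, sum_mul_sum, ite_and, sum_ite_irrel, sum_ite_mem, univ_inter,
          sum_const_zero]
    _ = ∑ i, ∑ j, ∑ I ∈ 𝒜, if i ∈ I ∧ j ∈ I then a i * a j else 0 := by
        rw [sum_comm]; exact sum_congr rfl fun i _ ↦ sum_comm
    _ = _ := by simp only [← sum_filter, sum_const]

variable {m : ℕ}

theorem card_filter_powersetCard_mem (hm : 1 ≤ m) (i : α) :
    #{I ∈ powersetCard m (univ : Finset α) | i ∈ I} = (Fintype.card α - 1).choose (m - 1) := by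
  simpa using card_filter_powersetCard_subset {i} univ m (subset_univ _) (by simpa using hm)

theorem card_filter_powersetCard_mem_notMem (hm : 1 ≤ m) {i j : α} (hij : i ≠ j) :
    #{I ∈ powersetCard m (univ : Finset α) | i ∈ I ∧ j ∉ I}
      = (Fintype.card α - 2).choose (m - 1) := by
  have h : {I ∈ powersetCard m (univ : Finset α) | i ∈ I ∧ j ∉ I}
      = {I ∈ powersetCard m (univ.erase j) | {i} ⊆ I} := by
    ext I; simp [subset_erase]; tauto
  rw [h, card_filter_powersetCard_subset _ _ m (by simpa using hij) (by simpa using hm)]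
  simp [Nat.sub_sub]

theorem card_filter_powersetCard_mem_mem_add (hm : 1 ≤ m) {i j : α} (hij : i ≠ j) :
    #{I ∈ powersetCard m (univ : Finset α) | i ∈ I ∧ j ∈ I}
      + (Fintype.card α - 2).choose (m - 1) = (Fintype.card α - 1).choose (m - 1) := by
  rw [← card_filter_powersetCard_mem hm i, ← card_filter_powersetCard_mem_notMem hm hij,
    ← card_filter_add_card_filter_not (s := {I ∈ powersetCard m univ | i ∈ I}) (j ∈ ·),
    filter_filter, filter_filter]

theorem sum_powersetCard_sq_sum {R : Type*} [CommRing R] (hm : 1 ≤ m) (a : α → R) :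
    ∑ I ∈ powersetCard m univ, (∑ i ∈ I, a i) ^ 2
      = (Fintype.card α - 2).choose (m - 1) * ∑ i, a i ^ 2
        + ((Fintype.card α - 1).choose (m - 1) - (Fintype.card α - 2).choose (m - 1) : R)
          * (∑ i, a i) ^ 2 := by
  have hcard : ∀ i j : α, (#{I ∈ powersetCard m univ | i ∈ I ∧ j ∈ I} : R)
      = ((Fintype.card α - 1).choose (m - 1) - (Fintype.card α - 2).choose (m - 1) : R)
        + if i = j then ((Fintype.card α - 2).choose (m - 1) : R) else 0 := by
    intro i j
    rcases eq_or_ne i j with rfl | hij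
    · simp [card_filter_powersetCard_mem hm]
    · rw [if_neg hij, ← card_filter_powersetCard_mem_mem_add hm hij]
      push_cast; ring
  rw [sum_sq_sum_eq_sum_sum_card_smul]
  simp only [nsmul_eq_mul, hcard, add_mul, sum_add_distrib, ite_mul, zero_mul, sum_ite_eq,
    mem_univ, if_true, ← mul_sum, sq, sum_mul_sum]
  ring
end

theorem sum_of_squares_over_subsets_general
    (n m : ℕ) (hm1 : 1 ≤ m)
    (a : Fin n → ℤ) (hsum : ∑ i, a i = 0) :
    ∑ I ∈ Finset.univ.powersetCard m, (∑ i ∈ I, a i) ^ 2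
      = (n - 2).choose (m - 1) * ∑ i, (a i) ^ 2 := by
  simpa [hsum] using sum_powersetCard_sq_sum hm1 a

/-- For a ∈ ℤⁿ with Σ aᵢ = 0 and 1 ≤ m ≤ n-1,
Σ_{#I = m} (Σ_{i∈I} aᵢ)² = C(n-2, m-1) · Σ aᵢ². -/
theorem sum_of_squares_over_subsets
    (n m : ℕ) (hm1 : 1 ≤ m) (hm2 : m ≤ n - 1)
    (a : Fin n → ℤ) (hsum : ∑ i, a i = 0) :
    ∑ I ∈ Finset.univ.powersetCard m, (∑ i ∈ I, a i) ^ 2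
      = (n - 2).choose (m - 1) * ∑ i, (a i) ^ 2 :=
  sum_of_squares_over_subsets_general n m hm1 a hsum
end

section
/- Define χ(a) := ((-1)^{n-1} (n-1)!/24) · (Σ_{i=1}^n a_i^2 − 2) for a ∈ ℤ^n with Σ a_i = 0. Then for any a = (a_1,…,a_n,a_{n+1}) ∈ ℤ^{n+1} with Σ_{i=1}^{n+1} a_i = 0, the recurrence χ(a) = a_{n+1}^2 · ((-1)^n (n-1)!/12) − Σ_{i=1}^n χ(a(i)) holds, where a(i) := (a_1,…,a_{i-1}, a_i + a_{n+1}, a_{i+1},…,a_n). -/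
/-- χ(a) = ((-1)^{m-1} (m-1)!/24) · (Σ aᵢ² − 2), the closed rank-one formula for the
orbifold Euler characteristic of the genus-one double ramification locus. -/
noncomputable def chiDR {m : ℕ} (b : Fin m → ℤ) : ℚ :=
  ((-1 : ℚ) ^ (m - 1) * (m - 1).factorial / 24) * ((∑ i, (b i : ℚ) ^ 2) - 2)

/-- the recurrence
χ(a) = a_{n+1}² · ((-1)ⁿ (n-1)!/12) − Σ_{i=1}ⁿ χ(a(i)),
where a(i) replaces aᵢ by aᵢ + a_{n+1} and drops the last entry. -/
theorem chiDR_recurrence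
    (n : ℕ) (hn : 1 ≤ n) (a : Fin (n + 1) → ℤ) (hsum : ∑ i, a i = 0) :
    chiDR a
      = (a (Fin.last n) : ℚ) ^ 2 * ((-1 : ℚ) ^ n * (n - 1).factorial / 12)
        - ∑ i : Fin n,
            chiDR (fun j : Fin n =>
              if j = i then a j.castSucc + a (Fin.last n) else a j.castSucc) := by
  obtain ⟨k, rfl⟩ : ∃ k, n = k + 1 := ⟨n - 1, by omega⟩
  set c : ℚ := (a (Fin.last (k+1)) : ℚ) with hc
  set T : ℚ := ∑ j : Fin (k+1), (a j.castSucc : ℚ)^2 with hT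
  have h1 : ∑ j : Fin (k+1), a j.castSucc = - a (Fin.last (k+1)) := by
    rw [Fin.sum_univ_castSucc] at hsum; linarith
  have hs : ∑ j : Fin (k+1), (a j.castSucc : ℚ) = -c := by
    rw [hc]; exact_mod_cast congrArg (Int.cast : ℤ → ℚ) h1
  have hinner : ∀ i : Fin (k+1),
      ∑ j : Fin (k+1), ((if j = i then a j.castSucc + a (Fin.last (k+1))
          else a j.castSucc : ℤ) : ℚ)^2
        = T + (2*c*(a i.castSucc : ℚ) + c^2) := by
    intro i
    have key : ∀ j : Fin (k+1), ((if j = i then a j.castSucc + a (Fin.last (k+1))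
          else a j.castSucc : ℤ) : ℚ)^2
        = (a j.castSucc : ℚ)^2 + (if j = i then 2*c*(a j.castSucc : ℚ) + c^2 else 0) := by
      intro j; split_ifs with h <;> push_cast <;> ring
    rw [Finset.sum_congr rfl (fun j _ => key j), Finset.sum_add_distrib,
      Finset.sum_ite_eq' Finset.univ i, if_pos (Finset.mem_univ i)]
  simp only [chiDR, Nat.add_sub_cancel, hinner]
  have hL : ∑ i : Fin (k+2), (a i : ℚ)^2 = T + c^2 := by
    rw [Fin.sum_univ_castSucc, hT, hc]
  rw [hL]
  rw [show ∑ i : Fin (k+1),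
        ((-1:ℚ)^k * (k.factorial : ℚ) / 24) * (T + (2*c*(a i.castSucc : ℚ) + c^2) - 2)
      = ((-1:ℚ)^k * (k.factorial : ℚ) / 24) *
        ((k+1)*T + (2*c*(-c) + (k+1)*c^2) - 2*(k+1)) by
    rw [← Finset.mul_sum]
    congr 1
    rw [Finset.sum_sub_distrib, Finset.sum_add_distrib, Finset.sum_add_distrib,
      Finset.sum_const, Finset.sum_const, Finset.sum_const, ← Finset.mul_sum, hs]
    simp [Finset.card_univ]
    ring]
  rw [pow_succ, Nat.factorial_succ]
  push_cast
  ring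
end

section
/- Let a = (a_1,…,a_n) ∈ ℤ^n with Σ_{i=1}^n a_i = 0 and n ≥ 2. Then ((-1)^n/12) · Σ over partitions 𝓘 = {I_1, I_2} of [n] into two nonempty parts of (−1)·(#I_1 − 1)!·(#I_2 − 1)!·(Σ_{i∈I_1} a_i)^2, plus ((-1)^n (n-1)!)/12, equals ((-1)^{n-1} (n-1)!/24)·(Σ_{i=1}^n a_i^2 − 2). -/
/-!
Since `∑ aᵢ = 0`, the square `(∑_{i ∈ I} aᵢ)²` equals `-∑_{i ∈ I, j ∉ I} aᵢ aⱼ`. Exchanging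
sums, the weighted sum over subsets becomes `-∑_{i ≠ j} aᵢ aⱼ U(i, j)`, where `U(i, j)` is the
total weight `(#I - 1)! (#Iᶜ - 1)!` of the subsets `I` containing `i` but not `j`. Removing `i`
from `I` identifies these with the subsets `J` of `[n] ∖ {i, j}`, of weight `#J! (n - 2 - #J)!`;
grouping by `#J`, each size contributes `(n - 2)!`, so `U(i, j) = (n - 1)!`. As
`∑_{i ≠ j} aᵢ aⱼ = -∑ aᵢ²`, the sum over partitions is `-(n - 1)! ∑ aᵢ² / 2`, and the identity
is arithmetic.
-/

open Finset Nat

theorem Finset.sum_powerset_factorial_mul_factorial {α : Type*} (s : Finset α) :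
    ∑ t ∈ s.powerset, (#t)! * (#s - #t)! = (#s + 1)! := by
  rw [sum_powerset_apply_card (fun k => k ! * (#s - k)!)]
  calc ∑ k ∈ range (#s + 1), (#s).choose k • (k ! * (#s - k)!)
      = ∑ _k ∈ range (#s + 1), (#s)! := sum_congr rfl fun k hk => by
        rw [smul_eq_mul, ← mul_assoc, choose_mul_factorial_mul_factorial (by grind)]
    _ = (#s + 1)! := by rw [sum_const, card_range, smul_eq_mul, factorial_succ]

section

variable {α : Type*} [Fintype α] [DecidableEq α]

theorem sum_filter_mem_notMem_factorial_mul_factorial {i j : α} (hij : i ≠ j) :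
    ∑ I with i ∈ I ∧ j ∉ I, (#I - 1)! * (#Iᶜ - 1)! = (Fintype.card α - 1)! := by
  set s : Finset α := {i, j}ᶜ
  have hcard : #s + 2 = Fintype.card α := by
    rw [card_compl, card_pair hij, Nat.sub_add_cancel (card_pair hij ▸ card_le_univ _)]
  have hi : ∀ J ∈ s.powerset, i ∉ J := fun J hJ => notMem_mono (mem_powerset.1 hJ) (by simp [s])
  have himage : ({I | i ∈ I ∧ j ∉ I} : Finset (Finset α)) = s.powerset.image (insert i) := by
    ext I
    simp only [mem_filter, mem_univ, true_and, mem_image, mem_powerset]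
    constructor
    · rintro ⟨hiI, hjI⟩
      refine ⟨I.erase i, fun x hx => ?_, insert_erase hiI⟩
      grind [mem_compl]
    · rintro ⟨J, hJ, rfl⟩
      grind [mem_compl]
  have hinj : Set.InjOn (insert i) (s.powerset : Set (Finset α)) := fun J hJ K hK h => by
    rw [← erase_insert (hi J hJ), h, erase_insert (hi K hK)]
  have hterm : ∀ J ∈ s.powerset,
      (#(insert i J) - 1)! * (#(insert i J)ᶜ - 1)! = (#J)! * (#s - #J)! := by
    intro J hJ
    have := card_le_card (mem_powerset.1 hJ)
    rw [card_compl, card_insert_of_notMem (hi J hJ), ← hcard]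
    congr 2
    omega
  rw [himage, sum_image hinj, sum_congr rfl hterm, sum_powerset_factorial_mul_factorial, ← hcard]
  rfl

theorem sq_sum_eq_neg_sum_sum_compl {R : Type*} [CommRing R] {b : α → R}
    (hb : ∑ i, b i = 0) (I : Finset α) :
    (∑ i ∈ I, b i) ^ 2 = -∑ i ∈ I, ∑ j ∈ Iᶜ, b i * b j := by
  rw [← sum_mul_sum, eq_neg_of_add_eq_zero_right ((sum_add_sum_compl I b).trans hb)]
  ring

theorem sum_sum_compl_eq_sum_sum_ite {M : Type*} [AddCommMonoid M] (f : α → α → M)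
    (I : Finset α) :
    ∑ i ∈ I, ∑ j ∈ Iᶜ, f i j = ∑ i, ∑ j, if i ∈ I ∧ j ∉ I then f i j else 0 := by
  rw [← Fintype.sum_ite_mem I]
  refine sum_congr rfl fun i _ => ?_
  by_cases hi : i ∈ I <;> simp [hi, ← Fintype.sum_ite_mem Iᶜ]

theorem sum_mul_sq_sum_eq_neg_sum_cut {R : Type*} [CommRing R] (w : Finset α → R) {b : α → R}
    (hb : ∑ i, b i = 0) :
    ∑ I, w I * (∑ i ∈ I, b i) ^ 2 = -∑ i, ∑ j, b i * b j * ∑ I with i ∈ I ∧ j ∉ I, w I := by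
  simp_rw [sq_sum_eq_neg_sum_sum_compl hb, sum_sum_compl_eq_sum_sum_ite, mul_neg,
    sum_neg_distrib, mul_sum, sum_filter]
  rw [sum_comm]
  refine congrArg _ (sum_congr rfl fun i _ => ?_)
  rw [sum_comm]
  refine sum_congr rfl fun j _ => sum_congr rfl fun I _ => ?_
  split_ifs <;> ring

theorem sum_factorial_mul_factorial_mul_sq_sum {R : Type*} [CommRing R] {b : α → R}
    (hb : ∑ i, b i = 0) :
    ∑ I, ((#I - 1)! * (#Iᶜ - 1)! : R) * (∑ i ∈ I, b i) ^ 2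
      = (Fintype.card α - 1)! * ∑ i, b i ^ 2 := by
  set c : R := ((Fintype.card α - 1)! : R) with hc
  have hweight (i j : α) :
      ∑ I with i ∈ I ∧ j ∉ I, ((#I - 1)! * (#Iᶜ - 1)! : R) = if i = j then 0 else c := by
    rcases eq_or_ne i j with rfl | hij
    · simp
    · rw [if_neg hij, hc, ← sum_filter_mem_notMem_factorial_mul_factorial hij]
      push_cast
      rfl
  calc ∑ I, ((#I - 1)! * (#Iᶜ - 1)! : R) * (∑ i ∈ I, b i) ^ 2
      = -∑ i, ∑ j, (c * (b i * b j) - if i = j then c * b i ^ 2 else 0) := by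
        rw [sum_mul_sq_sum_eq_neg_sum_cut _ hb]
        refine congrArg _ (sum_congr rfl fun i _ => sum_congr rfl fun j _ => ?_)
        rw [hweight]
        split_ifs with h
        · subst h; ring
        · ring
    _ = c * ∑ i, b i ^ 2 := by simp [sum_sub_distrib, ← mul_sum, hb]

theorem sum_powerset_filter_nonempty_ne_univ {M : Type*} [AddCommMonoid M] {f : Finset α → M}
    (h_empty : f ∅ = 0) (h_univ : f univ = 0) :
    ∑ I ∈ univ.powerset.filter (fun I : Finset α => I.Nonempty ∧ I ≠ univ), f I = ∑ I, f I := by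
  rw [powerset_univ]
  refine sum_subset (filter_subset _ _) fun I _ hI => ?_
  rw [mem_filter, not_and_or, not_and_or, not_nonempty_iff_eq_empty, not_not] at hI
  rcases hI with h | rfl | rfl
  · exact absurd (mem_univ I) h
  · exact h_empty
  · exact h_univ

end

/-- rank-one specialization of the higher-rank formula matches the closed
rank-one formula.  The sum over unordered partitions {I₁, I₂} of [n] into two nonempty
parts is formalized as half the sum over nonempty proper subsets I (taking I₁ = I,
I₂ = Iᶜ); note (Σ_{i∈I₁} aᵢ)² = (Σ_{i∈I₂} aᵢ)² since Σ aᵢ = 0. -/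
theorem rank_one_specialization
    (n : ℕ) (hn : 2 ≤ n) (a : Fin n → ℤ) (hsum : ∑ i, a i = 0) :
    ((-1 : ℚ) ^ n / 12) *
        ((1 : ℚ) / 2 *
          ∑ I ∈ Finset.univ.powerset.filter
              (fun I : Finset (Fin n) => I.Nonempty ∧ I ≠ Finset.univ),
            (-1 : ℚ) * (I.card - 1).factorial * (Iᶜ.card - 1).factorial *
              ((∑ i ∈ I, a i : ℤ) : ℚ) ^ 2)
      + ((-1 : ℚ) ^ n * (n - 1).factorial) / 12
      = ((-1 : ℚ) ^ (n - 1) * (n - 1).factorial / 24) * ((∑ i, (a i : ℚ) ^ 2) - 2) := by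
  have hsum' : ∑ i, (a i : ℚ) = 0 := by exact_mod_cast hsum
  have hpartitions : ∑ I ∈ Finset.univ.powerset.filter
        (fun I : Finset (Fin n) => I.Nonempty ∧ I ≠ Finset.univ),
      (-1 : ℚ) * (I.card - 1).factorial * (Iᶜ.card - 1).factorial *
        ((∑ i ∈ I, a i : ℤ) : ℚ) ^ 2
      = -((n - 1)! * ∑ i, (a i : ℚ) ^ 2) := by
    have hweighted := sum_factorial_mul_factorial_mul_sq_sum hsum'
    rw [Fintype.card_fin] at hweighted
    rw [sum_powerset_filter_nonempty_ne_univ (by simp) (by simp [hsum]), ← hweighted,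
      ← sum_neg_distrib]
    push_cast
    exact sum_congr rfl fun I _ => by ring
  obtain ⟨m, rfl⟩ : ∃ m, n = m + 1 := ⟨n - 1, by omega⟩
  rw [hpartitions, Nat.add_sub_cancel, pow_succ]
  ring
end

section
/- Let B be an r×(k+1) integer matrix whose rows sum to zero, a_{n+1} a nonzero integer, and let A' be the (r+1)×(k+2) matrix obtained from B by adding a new first row (a_{I_1},…,a_{I_{k+1}}, a_{n+1}) whose entries sum to zero and a new last column whose entries below the first row are all zero. Then the gcd of all (k+1)×(k+1) minors of A' equals |a_{n+1}| times the gcd of all k×k minors of B. -/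
/-- The gcd of all m×m minors of a matrix. -/
def gcdMinors {r n : ℕ} (A : Matrix (Fin r) (Fin n) ℤ) (m : ℕ) : ℤ :=
  Finset.univ.gcd
    (fun p : (Fin m → Fin r) × (Fin m → Fin n) => (A.submatrix p.1 p.2).det)

/-!
The rows of `A'` sum to zero, so its first column is minus the sum of the others: `A'` factors
through its last `k + 1` columns, and every `(k + 1)`-minor of `A'` is a multiple of the minor on
the same rows and those columns. There the last column is `(a, 0, …, 0)` or zero, so expanding
along it gives `±a` times a `k`-minor of `B` (or zero). Conversely, the minor of `A'` on the top
row, the last column and any `k` rows and columns of `B` is `±a` times the corresponding minor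
of `B`.
-/

open Matrix

namespace Matrix

variable {R : Type*} [CommRing R]

theorem dvd_det_of_dvd_det_submatrix_perm {n : Type*} [Fintype n] [DecidableEq n]
    {M : Matrix n n R} {d : R} (σ : Equiv.Perm n) (h : d ∣ (M.submatrix σ id).det) :
    d ∣ M.det := by
  rw [det_permute] at h
  rcases Int.units_eq_one_or (Equiv.Perm.sign σ) with hσ | hσ <;> simpa [hσ] using h

theorem eq_submatrix_succ_mul_of_sum_eq_zero {m n : ℕ} {A : Matrix (Fin m) (Fin (n + 1)) R}
    (hA : ∀ i, ∑ j, A i j = 0) :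
    A = A.submatrix id Fin.succ *
      of fun i => (Fin.cons (-1) (Pi.single i 1) : Fin (n + 1) → R) := by
  ext i j
  refine Fin.cases ?_ (fun j => ?_) j
  · simpa [mul_apply, Fin.sum_univ_succ, eq_neg_iff_add_eq_zero] using hA i
  · simp [mul_apply, Pi.single_apply]

theorem det_submatrix_succ_dvd_of_sum_eq_zero {m n : ℕ} {A : Matrix (Fin m) (Fin (n + 1)) R}
    (hA : ∀ i, ∑ j, A i j = 0) (p : Fin n → Fin m) (q : Fin n → Fin (n + 1)) :
    (A.submatrix p Fin.succ).det ∣ (A.submatrix p q).det := by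
  conv_rhs => rw [eq_submatrix_succ_mul_of_sum_eq_zero hA]
  rw [submatrix_mul _ _ _ id _ Function.bijective_id, det_mul]
  exact dvd_mul_right _ _

theorem dvd_det_submatrix_of_forall_cons_zero {r m : ℕ}
    {M : Matrix (Fin (r + 1)) (Fin (m + 1)) R} (hM : ∀ i : Fin r, M i.succ (Fin.last m) = 0) {d : R}
    (hd : ∀ f : Fin m → Fin r, d ∣ (M.submatrix (Fin.cons 0 (Fin.succ ∘ f)) id).det)
    (p : Fin (m + 1) → Fin (r + 1)) : d ∣ (M.submatrix p id).det := by
  by_cases h0 : ∃ i, p i = 0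
  swap
  · push Not at h0
    rw [det_eq_zero_of_column_eq_zero (Fin.last m) fun i => ?_]
    · exact dvd_zero d
    obtain ⟨j, hj⟩ := Fin.exists_succ_eq.2 (h0 i)
    simp [← hj, hM]
  obtain ⟨i₀, hi₀⟩ := h0
  -- move a copy of the top row to the front; a second copy would make two rows equal
  apply dvd_det_of_dvd_det_submatrix_perm (Equiv.swap 0 i₀)
  set q := p ∘ Equiv.swap 0 i₀ with hq
  change d ∣ (M.submatrix q id).det
  have hq0 : q 0 = 0 := by simp [hq, hi₀]
  by_cases hrep : ∃ j : Fin m, q j.succ = 0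
  · obtain ⟨j, hj⟩ := hrep
    rw [det_zero_of_row_eq (Fin.succ_ne_zero j) (by ext l; simp [hj, hq0])]
    exact dvd_zero d
  push Not at hrep
  convert hd fun j => (q j.succ).pred (hrep j)
  ext i
  refine Fin.cases ?_ (fun j => ?_) i <;> simp [hq0]


variable {r n : ℕ}

def bordered (B : Matrix (Fin r) (Fin n) R) (c : Fin n → R) (a : R) :
    Matrix (Fin (r + 1)) (Fin (n + 1)) R :=
  of (Fin.cons (Fin.snoc c a) fun i => Fin.snoc (B i) 0)

variable (B : Matrix (Fin r) (Fin n) R) (c : Fin n → R) (a : R)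

@[simp] theorem bordered_zero_castSucc (j : Fin n) : bordered B c a 0 j.castSucc = c j := by
  simp [bordered]

@[simp] theorem bordered_zero_last : bordered B c a 0 (Fin.last n) = a := by
  simp [bordered]

@[simp] theorem bordered_succ_castSucc (i : Fin r) (j : Fin n) :
    bordered B c a i.succ j.castSucc = B i j := by
  simp [bordered]

@[simp] theorem bordered_succ_last (i : Fin r) : bordered B c a i.succ (Fin.last n) = 0 := by
  simp [bordered]

theorem sum_bordered_eq_zero (hB : ∀ i, ∑ j, B i j = 0) (hc : ∑ j, c j + a = 0)
    (i : Fin (r + 1)) : ∑ j, bordered B c a i j = 0 := by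
  refine Fin.cases ?_ (fun i => ?_) i <;> simp [Fin.sum_univ_castSucc, hB, hc]

theorem bordered_submatrix_cons_zero {m : ℕ} (f : Fin m → Fin r) :
    (bordered B c a).submatrix (Fin.cons 0 (Fin.succ ∘ f)) id =
      bordered (B.submatrix f id) c a := by
  ext i j
  refine Fin.cases ?_ (fun i => ?_) i <;> refine Fin.lastCases ?_ (fun j => ?_) j <;> simp

theorem bordered_submatrix_snoc_last {m : ℕ} (g : Fin m → Fin n) :
    (bordered B c a).submatrix id (Fin.snoc (Fin.castSucc ∘ g) (Fin.last n)) =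
      bordered (B.submatrix id g) (c ∘ g) a := by
  ext i j
  refine Fin.cases ?_ (fun i => ?_) i <;> refine Fin.lastCases ?_ (fun j => ?_) j <;> simp

theorem bordered_submatrix_succ (B : Matrix (Fin r) (Fin (n + 1)) R) (c : Fin (n + 1) → R) :
    (bordered B c a).submatrix id Fin.succ = bordered (B.submatrix id Fin.succ) (Fin.tail c) a := by
  ext i j
  refine Fin.cases ?_ (fun i => ?_) i <;> refine Fin.lastCases ?_ (fun j => ?_) j <;>
    simp [-Fin.castSucc_succ, Fin.succ_castSucc, Fin.tail]

theorem det_bordered (B : Matrix (Fin n) (Fin n) R) (c : Fin n → R) :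
    (bordered B c a).det = (-1) ^ n * a * B.det := by
  have hB : (bordered B c a).submatrix Fin.succ Fin.castSucc = B := by ext; simp
  simp [det_succ_column _ (Fin.last n), Fin.sum_univ_succ, hB]

end Matrix

theorem gcdMinors_dvd_det {r n m : ℕ} (A : Matrix (Fin r) (Fin n) ℤ) (p : Fin m → Fin r)
    (q : Fin m → Fin n) : gcdMinors A m ∣ (A.submatrix p q).det :=
  Finset.gcd_dvd (Finset.mem_univ (p, q))

section BorderedMinors

variable {r k : ℕ} (B : Matrix (Fin r) (Fin (k + 1)) ℤ) (c : Fin (k + 1) → ℤ) (a : ℤ)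

theorem gcdMinors_bordered_dvd_mul_det (f : Fin k → Fin r) (g : Fin k → Fin (k + 1)) :
    gcdMinors (bordered B c a) (k + 1) ∣ a * (B.submatrix f g).det := by
  have h := gcdMinors_dvd_det (bordered B c a) (Fin.cons 0 (Fin.succ ∘ f) ∘ id)
    (id ∘ Fin.snoc (Fin.castSucc ∘ g) (Fin.last (k + 1)))
  rwa [← submatrix_submatrix, bordered_submatrix_cons_zero, bordered_submatrix_snoc_last,
    det_bordered, mul_assoc, (isUnit_neg_one.pow k).dvd_mul_left] at h

theorem mul_gcdMinors_dvd_det_bordered_submatrix (hB : ∀ i, ∑ j, B i j = 0)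
    (hc : ∑ j, c j + a = 0) (p : Fin (k + 1) → Fin (r + 1)) (q : Fin (k + 1) → Fin (k + 2)) :
    a * gcdMinors B k ∣ ((bordered B c a).submatrix p q).det := by
  refine dvd_trans ?_ (det_submatrix_succ_dvd_of_sum_eq_zero (sum_bordered_eq_zero B c a hB hc) p q)
  change _ ∣ (((bordered B c a).submatrix id Fin.succ).submatrix p id).det
  rw [bordered_submatrix_succ]
  refine dvd_det_submatrix_of_forall_cons_zero (by simp) (fun f => ?_) p
  rw [bordered_submatrix_cons_zero, det_bordered, mul_assoc, (isUnit_neg_one.pow k).dvd_mul_left]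
  exact mul_dvd_mul_left a (gcdMinors_dvd_det B f Fin.succ)

end BorderedMinors

theorem gcdMinors_of_bordered_matrix_general
    (r k : ℕ)
    (B : Matrix (Fin r) (Fin (k + 1)) ℤ)
    (hrow : ∀ l : Fin r, ∑ i : Fin (k + 1), B l i = 0)
    (c : Fin (k + 1) → ℤ) (a : ℤ)
    (hc : (∑ i, c i) + a = 0) :
    gcdMinors
        (Matrix.of (Fin.cons (Fin.snoc c a) (fun i : Fin r => Fin.snoc (B i) 0))
          : Matrix (Fin (r + 1)) (Fin (k + 2)) ℤ)
        (k + 1)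
      = (a.natAbs : ℤ) * gcdMinors B k := by
  have hS : (a.natAbs : ℤ) * gcdMinors B k =
      Finset.univ.gcd fun p : (Fin k → Fin r) × (Fin k → Fin (k + 1)) =>
        a * (B.submatrix p.1 p.2).det := by
    rw [Finset.gcd_mul_left, ← Int.abs_eq_normalize, Int.natCast_natAbs, gcdMinors]
  rw [hS]
  exact dvd_antisymm_of_normalize_eq Finset.normalize_gcd Finset.normalize_gcd
    (Finset.dvd_gcd fun p _ => gcdMinors_bordered_dvd_mul_det B c a p.1 p.2)
    (Finset.dvd_gcd fun p _ => (Finset.gcd_mul_left' _ _ _).dvd.trans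
      (mul_gcdMinors_dvd_det_bordered_submatrix B c a hrow hc p.1 p.2))

/-- Let B be an r×(k+1) integer matrix with zero row sums, a ≠ 0, and A'
the (r+1)×(k+2) matrix with first row (c₁,…,c_{k+1}, a) (summing to zero), bottom-left
block B and bottom-right column of zeros.  Then
G_{(k+1)×(k+1)}(A') = |a| · G_{k×k}(B). -/
theorem gcdMinors_of_bordered_matrix
    (r k : ℕ) (hk : k ≤ r)
    (B : Matrix (Fin r) (Fin (k + 1)) ℤ)
    (hrow : ∀ l : Fin r, ∑ i : Fin (k + 1), B l i = 0)
    (c : Fin (k + 1) → ℤ) (a : ℤ) (ha : a ≠ 0)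
    (hc : (∑ i, c i) + a = 0) :
    gcdMinors
        (Matrix.of (Fin.cons (Fin.snoc c a) (fun i : Fin r => Fin.snoc (B i) 0))
          : Matrix (Fin (r + 1)) (Fin (k + 2)) ℤ)
        (k + 1)
      = (a.natAbs : ℤ) * gcdMinors B k :=
  gcdMinors_of_bordered_matrix_general r k B hrow c a hc
end

section
/- Define L(r,n,A) := ((-1)^{n+r}/12) · ((n-1)!/(r+1)!) · Σ_{I ⊆ [n], #I = r} M_I(A)^2 for an r×n integer matrix A with zero row sums, where M_I(A) is the r×r minor on columns I. Then for an r×(n+1) zero-row-sum matrix A of the special form whose last column is (a_{n+1}, 0, …, 0)^T with bottom-left block B (an (r−1)×n zero-row-sum matrix) and first row (a_1,…,a_n,a_{n+1}), the identity L(r, n+1, A) = a_{n+1}^2 · L(r−1, n, B) − Σ_{i=1}^n L(r, n, A(i)) holds, where A(i) is the r×n matrix with first row (a_1,…,a_{i-1}, a_i+a_{n+1}, a_{i+1},…,a_n) and remaining rows B. -/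
/-- The r×r minor of an r×n integer matrix on a set I of r columns (columns in
increasing order); junk value 0 if #I ≠ r. -/
def minorOn {r n : ℕ} (A : Matrix (Fin r) (Fin n) ℤ) (I : Finset (Fin n)) : ℤ :=
  if h : I.card = r then (A.submatrix id (I.orderEmbOfFin h)).det else 0

/-- The leading term L(r, n, A) = ((-1)^{n+r}/12)·((n-1)!/(r+1)!)·Σ_{#I=r} M_I(A)². -/
noncomputable def Lterm {r n : ℕ} (A : Matrix (Fin r) (Fin n) ℤ) : ℚ :=
  ((-1 : ℚ) ^ (n + r) / 12) * ((n - 1).factorial / ((r + 1).factorial : ℚ)) *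
    ∑ I ∈ Finset.univ.powersetCard r, ((minorOn A I : ℤ) : ℚ) ^ 2

open Finset Matrix

/-!
By Cauchy–Binet, sums of squared maximal minors are Gram determinants:
`Σ_I M_I(A)² = det (A Aᵀ)`. Write `C = (a; B)`, `S = Σ M_J(C)²` and `T = Σ M_I(B)²`.
The Gram matrix of the big matrix is `C Cᵀ` plus `a_{n+1}²` in the corner, so its sum of squared
minors is `S + a_{n+1}² T`. The minor `M_J(u; B)` is linear in the first row `u`, and
`A(i) = (a + a_{n+1} eᵢ; B)`. Summing `M_J(A(i))²` over `i`, the cross terms add up to the Gram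
determinant `det (C (1; B)ᵀ) = (Σ a) T = -a_{n+1} T`, since the rows of `B` sum to zero, while
`Σᵢ M_J(eᵢ; B)² = Σ_{i ∈ J} M_{J∖i}(B)²`, which double counts to `(n - r) T`. Hence
`Σᵢ Σ_J M_J(A(i))² = n S + a_{n+1}² (n - r - 2) T`, and the recurrence becomes an identity
between the rational prefactors, via `n! = n (n-1)!` and `(r+2)! = (r+2) (r+1)!`.
-/

theorem Finset.sum_powersetCard_succ_sum_erase {α M : Type*} [Fintype α] [DecidableEq α]
    [AddCommMonoid M] (k : ℕ) (f : Finset α → M) :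
    ∑ J ∈ univ.powersetCard (k + 1), ∑ i ∈ J, f (J.erase i)
      = ∑ I ∈ univ.powersetCard k, ∑ _i ∈ Iᶜ, f I := by
  rw [sum_sigma', sum_sigma']
  refine sum_nbij' (fun p => ⟨p.1.erase p.2, p.2⟩) (fun p => ⟨insert p.2 p.1, p.2⟩)
    ?_ ?_ ?_ ?_ fun _ _ => rfl
  · rintro ⟨J, i⟩ h
    simp only [mem_sigma, mem_powersetCard_univ, mem_compl] at h ⊢
    simp [card_erase_of_mem h.2, h.1]
  · rintro ⟨I, i⟩ h
    simp only [mem_sigma, mem_powersetCard_univ, mem_compl] at h ⊢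
    simp [card_insert_of_notMem h.2, h.1]
  · rintro ⟨J, i⟩ h
    simp [insert_erase (mem_sigma.mp h).2]
  · rintro ⟨I, i⟩ h
    simp [erase_insert (mem_compl.mp (mem_sigma.mp h).2)]

theorem Finset.orderEmbOfFin_comp_succAbove {α : Type*} [LinearOrder α] {s : Finset α} {k : ℕ}
    (h : s.card = k + 1) (j : Fin (k + 1)) (h' : (s.erase (s.orderEmbOfFin h j)).card = k) :
    s.orderEmbOfFin h ∘ j.succAbove = (s.erase (s.orderEmbOfFin h j)).orderEmbOfFin h' := by
  refine orderEmbOfFin_unique h' (fun l => mem_erase.mpr ⟨?_, orderEmbOfFin_mem s h _⟩)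
    ((s.orderEmbOfFin h).strictMono.comp (Fin.strictMono_succAbove j))
  exact (s.orderEmbOfFin h).injective.ne (Fin.succAbove_ne j l)

section Determinants

variable {R α : Type*} [CommRing R] {k m n : ℕ}

theorem Matrix.det_eq_mul_det_submatrix_succ_of_col_zero
    (M : Matrix (Fin (k + 1)) (Fin (k + 1)) R) (h : ∀ i : Fin k, M i.succ 0 = 0) :
    M.det = M 0 0 * (M.submatrix Fin.succ Fin.succ).det := by
  simp [det_succ_column_zero M, Fin.sum_univ_succ, h]

theorem Matrix.det_add_single_zero_zero (M : Matrix (Fin (k + 1)) (Fin (k + 1)) R) (c : R) :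
    (M + single 0 0 c).det = M.det + c * (M.submatrix Fin.succ Fin.succ).det := by
  have hsub (f : Fin k → Fin (k + 1)) :
      (M + single 0 0 c).submatrix f Fin.succ = M.submatrix f Fin.succ := by
    ext i j
    simp [(Fin.succ_ne_zero _).symm]
  simp only [det_succ_column_zero, hsub, Fin.sum_univ_succ, add_apply, single_apply]
  simp [(Fin.succ_ne_zero _).symm]
  ring

-- `Fin.cons_zero` and `Fin.cons_succ` do not fire when the tail is typed as a `Matrix`.
@[simp]
theorem Matrix.cons_apply_zero (u : Fin n → α) (B : Matrix (Fin m) (Fin n) α) (j : Fin n) :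
    (Fin.cons u B : Fin (m + 1) → Fin n → α) 0 j = u j :=
  rfl

@[simp]
theorem Matrix.cons_apply_succ (u : Fin n → α) (B : Matrix (Fin m) (Fin n) α) (i : Fin m)
    (j : Fin n) : (Fin.cons u B : Fin (m + 1) → Fin n → α) i.succ j = B i j :=
  rfl

theorem Matrix.submatrix_of_cons (u : Fin n → α) (B : Matrix (Fin m) (Fin n) α)
    (e : Fin k → Fin n) :
    (of (Fin.cons u B) : Matrix (Fin (m + 1)) (Fin n) α).submatrix id e
      = of (Fin.cons (u ∘ e) (B.submatrix id e)) := by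
  ext i j
  cases i using Fin.cases <;> rfl

theorem Matrix.submatrix_succ_of_cons (u : Fin n → α) (B : Matrix (Fin m) (Fin n) α)
    (e : Fin k → Fin n) :
    (of (Fin.cons u B) : Matrix (Fin (m + 1)) (Fin n) α).submatrix Fin.succ e = B.submatrix id e :=
  rfl

end Determinants

section CauchyBinet

variable {R : Type*} [CommRing R] {m n : ℕ}

theorem Matrix.det_mul_transpose_eq_sum (A B : Matrix (Fin m) (Fin n) R) :
    (A * Bᵀ).det = ∑ f : Fin m → Fin n, (∏ i, B i (f i)) * (A.submatrix id f).det := by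
  simp only [det_apply', mul_apply, transpose_apply, Fintype.prod_sum, Finset.mul_sum,
    submatrix_apply, id]
  rw [Finset.sum_comm]
  refine Finset.sum_congr rfl fun f _ => Finset.sum_congr rfl fun σ _ => ?_
  rw [Finset.prod_mul_distrib]
  ring

theorem Matrix.sum_perm_submatrix_comp (A B : Matrix (Fin m) (Fin n) R) (e : Fin m → Fin n) :
    ∑ σ : Equiv.Perm (Fin m), (∏ i, B i (e (σ i))) * (A.submatrix id (e ∘ σ)).det
      = (A.submatrix id e).det * (B.submatrix id e).det := by
  have hperm (σ : Equiv.Perm (Fin m)) :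
      (A.submatrix id (e ∘ σ)).det = Equiv.Perm.sign σ * (A.submatrix id e).det := by
    rw [← det_permute' σ (A.submatrix id e), submatrix_submatrix, Function.comp_id]
  rw [← det_transpose (B.submatrix id e), det_apply' (B.submatrix id e)ᵀ, Finset.mul_sum]
  refine Finset.sum_congr rfl fun σ _ => ?_
  simp only [hperm, transpose_apply, submatrix_apply, id]
  ring

theorem sum_injective_image_eq_sum_perm (g : (Fin m → Fin n) → R) {J : Finset (Fin n)}
    (hJ : J.card = m) :
    ∑ f with Function.Injective f ∧ univ.image f = J, g f
      = ∑ σ : Equiv.Perm (Fin m), g (J.orderEmbOfFin hJ ∘ σ) := by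
  set e := J.orderEmbOfFin hJ
  symm
  refine Finset.sum_bij (fun σ _ => e ∘ σ) (fun σ _ => ?_) (fun σ _ τ _ h => ?_)
    (fun f hf => ?_) (fun _ _ => rfl)
  · simp only [mem_filter, mem_univ, true_and]
    refine ⟨e.injective.comp σ.injective, ?_⟩
    rw [← image_image, image_univ_equiv, ← J.image_orderEmbOfFin_univ hJ]
  · exact Equiv.ext fun i => e.injective (congrFun h i)
  · simp only [mem_filter, mem_univ, true_and] at hf
    have hrange (i : Fin m) : ∃ k, e k = f i := by
      rw [← Set.mem_range, J.range_orderEmbOfFin hJ, ← hf.2]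
      simp
    choose τ hτ using hrange
    have hτinj : Function.Injective τ := fun i j hij => hf.1 (by rw [← hτ, ← hτ, hij])
    exact ⟨Equiv.ofBijective τ (Finite.injective_iff_bijective.mp hτinj), mem_univ _,
      funext hτ⟩

end CauchyBinet

theorem det_mul_transpose_eq_sum_minorOn {m n : ℕ} (A B : Matrix (Fin m) (Fin n) ℤ) :
    (A * Bᵀ).det = ∑ J ∈ univ.powersetCard m, minorOn A J * minorOn B J := by
  have hinj : ∀ f ∈ (univ : Finset (Fin m → Fin n)),
      (∏ i, B i (f i)) * (A.submatrix id f).det ≠ 0 → Function.Injective f := by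
    intro f _ hf
    by_contra hninj
    obtain ⟨i, j, hij, hne⟩ := Function.not_injective_iff.mp hninj
    exact hf (by rw [det_zero_of_column_eq hne fun k => by simp [hij], mul_zero])
  have himage : ∀ f ∈ (univ : Finset (Fin m → Fin n)).filter Function.Injective,
      univ.image f ∈ univ.powersetCard m := fun f hf => by
    rw [mem_powersetCard, card_image_of_injective _ (mem_filter.mp hf).2]
    simp
  rw [det_mul_transpose_eq_sum, ← sum_filter_of_ne hinj, ← sum_fiberwise_of_maps_to himage]
  refine Finset.sum_congr rfl fun J hJ => ?_
  have hJ : J.card = m := (mem_powersetCard.mp hJ).2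
  rw [filter_filter, sum_injective_image_eq_sum_perm _ hJ]
  simp only [Function.comp_apply]
  rw [sum_perm_submatrix_comp, minorOn, minorOn, dif_pos hJ, dif_pos hJ]

section Minors

variable {r n : ℕ}

def sumSqMinors (A : Matrix (Fin r) (Fin n) ℤ) : ℤ :=
  ∑ I ∈ univ.powersetCard r, minorOn A I ^ 2

theorem sumSqMinors_eq_det (A : Matrix (Fin r) (Fin n) ℤ) : sumSqMinors A = (A * Aᵀ).det := by
  simp only [sumSqMinors, det_mul_transpose_eq_sum_minorOn, sq]

theorem Lterm_eq_mul_sumSqMinors (A : Matrix (Fin r) (Fin n) ℤ) :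
    Lterm A
      = (-1 : ℚ) ^ (n + r) / 12 * ((n - 1).factorial / (r + 1).factorial) * sumSqMinors A := by
  simp [Lterm, sumSqMinors]

def consMinor (B : Matrix (Fin r) (Fin n) ℤ) (J : Finset (Fin n)) :
    (Fin n → ℤ) →ₗ[ℤ] ℤ where
  toFun u := minorOn (of (Fin.cons u B)) J
  map_add' u v := by
    unfold minorOn
    split_ifs with hJ
    · simp only [submatrix_of_cons]
      exact (detRowAlternating (n := Fin (r + 1)) (R := ℤ)).toMultilinearMap.cons_add _ _ _
    · simp
  map_smul' c u := by
    unfold minorOn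
    split_ifs with hJ
    · simp only [submatrix_of_cons]
      exact (detRowAlternating (n := Fin (r + 1)) (R := ℤ)).toMultilinearMap.cons_smul _ _ _
    · simp

theorem consMinor_apply (B : Matrix (Fin r) (Fin n) ℤ) (J : Finset (Fin n)) (u : Fin n → ℤ) :
    consMinor B J u = minorOn (of (Fin.cons u B)) J :=
  rfl

theorem consMinor_single_of_notMem (B : Matrix (Fin r) (Fin n) ℤ) {J : Finset (Fin n)}
    {i : Fin n} (hi : i ∉ J) : consMinor B J (Pi.single i 1) = 0 := by
  rw [consMinor_apply, minorOn]
  split_ifs with hJ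
  · rw [submatrix_of_cons]
    refine det_eq_zero_of_row_eq_zero 0 fun k => ?_
    have hk : J.orderEmbOfFin hJ k ≠ i := fun h => hi (h ▸ J.orderEmbOfFin_mem hJ k)
    simp [hk]
  · rfl

theorem consMinor_single_orderEmbOfFin (B : Matrix (Fin r) (Fin n) ℤ) {J : Finset (Fin n)}
    (hJ : J.card = r + 1) (j : Fin (r + 1)) :
    consMinor B J (Pi.single (J.orderEmbOfFin hJ j) 1)
      = (-1) ^ (j : ℕ) * minorOn B (J.erase (J.orderEmbOfFin hJ j)) := by
  have hJ' : (J.erase (J.orderEmbOfFin hJ j)).card = r := by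
    rw [card_erase_of_mem (J.orderEmbOfFin_mem hJ j), hJ, Nat.add_sub_cancel]
  rw [consMinor_apply, minorOn, dif_pos hJ, minorOn, dif_pos hJ', submatrix_of_cons,
    det_succ_row_zero, Fintype.sum_eq_single j fun k hk => ?_]
  · simp [submatrix_succ_of_cons, submatrix_submatrix, orderEmbOfFin_comp_succAbove hJ j hJ']
  · simp [hk]

theorem sq_consMinor_single_of_mem (B : Matrix (Fin r) (Fin n) ℤ) {J : Finset (Fin n)}
    (hJ : J.card = r + 1) {i : Fin n} (hi : i ∈ J) :
    consMinor B J (Pi.single i 1) ^ 2 = minorOn B (J.erase i) ^ 2 := by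
  obtain ⟨j, rfl⟩ : i ∈ Set.range (J.orderEmbOfFin hJ) := by
    rwa [range_orderEmbOfFin]
  rw [consMinor_single_orderEmbOfFin B hJ j, mul_pow, ← pow_mul, pow_mul', neg_one_sq, one_pow,
    one_mul]

theorem sum_sum_sq_consMinor_single (B : Matrix (Fin r) (Fin n) ℤ) :
    ∑ i, ∑ J ∈ univ.powersetCard (r + 1), consMinor B J (Pi.single i 1) ^ 2
      = (n - r) * sumSqMinors B := by
  have hJ (J : Finset (Fin n)) (hJ : J.card = r + 1) :
      ∑ i, consMinor B J (Pi.single i 1) ^ 2 = ∑ i ∈ J, minorOn B (J.erase i) ^ 2 := by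
    rw [← sum_subset (subset_univ J) fun i _ hi => by
      rw [consMinor_single_of_notMem B hi, sq, mul_zero]]
    exact sum_congr rfl fun i hi => sq_consMinor_single_of_mem B hJ hi
  rw [sum_comm, sum_congr rfl fun J hJ' => hJ J (mem_powersetCard_univ.mp hJ'),
    sum_powersetCard_succ_sum_erase r fun I => minorOn B I ^ 2, sumSqMinors, mul_sum]
  refine sum_congr rfl fun I hI => ?_
  have hI : I.card = r := mem_powersetCard_univ.mp hI
  have hrn : r ≤ n := hI ▸ (card_le_univ I).trans_eq (Fintype.card_fin n)
  rw [sum_const, card_compl, hI, Fintype.card_fin, nsmul_eq_mul, Nat.cast_sub hrn]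

theorem submatrix_succ_succ_of_cons_mul_transpose {R : Type*} [CommRing R]
    (B : Matrix (Fin r) (Fin n) R) (u v : Fin n → R) :
    (of (Fin.cons u B) * (of (Fin.cons v B))ᵀ).submatrix Fin.succ Fin.succ = B * Bᵀ := by
  ext i j
  simp [mul_apply]

theorem sum_consMinor_mul_consMinor_one (B : Matrix (Fin r) (Fin n) ℤ)
    (hB : ∀ l, ∑ j, B l j = 0) (u : Fin n → ℤ) :
    ∑ J ∈ univ.powersetCard (r + 1), consMinor B J u * consMinor B J 1
      = (∑ j, u j) * sumSqMinors B := by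
  simp only [consMinor_apply]
  rw [← det_mul_transpose_eq_sum_minorOn, det_eq_mul_det_submatrix_succ_of_col_zero,
    submatrix_succ_succ_of_cons_mul_transpose, sumSqMinors_eq_det]
  · simp [mul_apply]
  · intro l
    simp [mul_apply, hB]

theorem sumSqMinors_of_cons_snoc (B : Matrix (Fin r) (Fin n) ℤ) (a : Fin n → ℤ) (c : ℤ) :
    sumSqMinors (of (Fin.cons (Fin.snoc a c) fun i => Fin.snoc (B i) 0)
        : Matrix (Fin (r + 1)) (Fin (n + 1)) ℤ)
      = sumSqMinors (of (Fin.cons a B)) + c ^ 2 * sumSqMinors B := by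
  have hgram : (of (Fin.cons (Fin.snoc a c) fun i => Fin.snoc (B i) 0)
        : Matrix (Fin (r + 1)) (Fin (n + 1)) ℤ)
        * (of (Fin.cons (Fin.snoc a c) fun i => Fin.snoc (B i) 0))ᵀ
      = of (Fin.cons a B) * (of (Fin.cons a B))ᵀ + single 0 0 (c ^ 2) := by
    ext i j
    cases i using Fin.cases <;> cases j using Fin.cases <;>
      simp [mul_apply, Fin.sum_univ_castSucc, sq, (Fin.succ_ne_zero _).symm]
  rw [sumSqMinors_eq_det, sumSqMinors_eq_det, sumSqMinors_eq_det, hgram,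
    det_add_single_zero_zero, submatrix_succ_succ_of_cons_mul_transpose]

theorem sum_sumSqMinors_cons_add_single (B : Matrix (Fin r) (Fin n) ℤ)
    (hB : ∀ l, ∑ j, B l j = 0) (u : Fin n → ℤ) (c : ℤ) :
    ∑ i, sumSqMinors (of (Fin.cons (u + c • Pi.single i 1) B))
      = n * sumSqMinors (of (Fin.cons u B))
        + (2 * c * ∑ j, u j + c ^ 2 * (n - r)) * sumSqMinors B := by
  have hexpand (i : Fin n) : sumSqMinors (of (Fin.cons (u + c • Pi.single i 1) B))
      = sumSqMinors (of (Fin.cons u B))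
        + 2 * c * ∑ J ∈ univ.powersetCard (r + 1),
            consMinor B J u * consMinor B J (Pi.single i 1)
        + c ^ 2 * ∑ J ∈ univ.powersetCard (r + 1), consMinor B J (Pi.single i 1) ^ 2 := by
    simp only [sumSqMinors, ← consMinor_apply, map_add, map_smul, smul_eq_mul, mul_sum,
      ← sum_add_distrib]
    exact sum_congr rfl fun J _ => by ring
  have hcross : ∑ i, ∑ J ∈ univ.powersetCard (r + 1),
      consMinor B J u * consMinor B J (Pi.single i 1) = (∑ j, u j) * sumSqMinors B := by
    rw [sum_comm]
    simp only [← mul_sum, ← map_sum, univ_sum_single]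
    exact sum_consMinor_mul_consMinor_one B hB u
  simp only [hexpand, sum_add_distrib, sum_const, card_univ, Fintype.card_fin, nsmul_eq_mul,
    ← mul_sum, hcross, sum_sum_sq_consMinor_single]
  ring

end Minors

/-- the leading-term recurrence
L(r, n+1, A) = a_{n+1}² · L(r−1, n, B) − Σᵢ L(r, n, A(i)) for A of the special form with
first row (a₁,…,aₙ,a_{n+1}), bottom-left block B, and last column (a_{n+1},0,…,0)ᵀ. -/
theorem leading_term_recurrence
    (r n : ℕ) (hn : 1 ≤ n)
    (B : Matrix (Fin r) (Fin n) ℤ)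
    (hB : ∀ l : Fin r, ∑ i : Fin n, B l i = 0)
    (a : Fin n → ℤ) (aLast : ℤ) (ha : (∑ i, a i) + aLast = 0) :
    Lterm (Matrix.of (Fin.cons (Fin.snoc a aLast) (fun i : Fin r => Fin.snoc (B i) 0))
        : Matrix (Fin (r + 1)) (Fin (n + 1)) ℤ)
      = (aLast : ℚ) ^ 2 * Lterm B
        - ∑ i : Fin n,
            Lterm (Matrix.of (Fin.cons (fun j => if j = i then a j + aLast else a j) B)
              : Matrix (Fin (r + 1)) (Fin n) ℤ) := by
  have hrow (i : Fin n) :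
      (fun j => if j = i then a j + aLast else a j) = a + aLast • Pi.single i 1 := by
    funext j
    by_cases h : j = i <;> simp [h]
  have hsum : ∑ i, (sumSqMinors (of (Fin.cons (a + aLast • Pi.single i 1) B)) : ℚ)
      = n * sumSqMinors (of (Fin.cons a B)) + aLast ^ 2 * (n - r - 2) * sumSqMinors B := by
    rw [← Int.cast_sum, sum_sumSqMinors_cons_add_single B hB, show ∑ j, a j = -aLast by omega]
    push_cast
    ring
  have hfac : ((n + 1 - 1).factorial : ℚ) = n * (n - 1).factorial := by
    rw [Nat.add_sub_cancel, ← Nat.mul_factorial_pred (by omega)]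
    push_cast
    ring
  simp only [Lterm_eq_mul_sumSqMinors, sumSqMinors_of_cons_snoc, hrow, ← mul_sum, hsum, hfac,
    Nat.factorial_succ (r + 1), pow_add]
  push_cast
  field_simp
  ring
end
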